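/- arXiv:1003.4716 — 4 statements merged into one kernel-verified Lean document; each statement's English description precedes it below -/
import Mathlib

section
/- Suppose f : ℝ → EReal is k-convex, r is an r-function, and max(r*(φ), f(φ)) < +∞ for some φ > 0. Then (cv(r, f*))° is an r-function. -/
/-!
Write `c = cv(r, f*)`. Every minorant admitted in `cv r f*` lies below `r`, hence below the
negative value `r a₀` on `(-∞, a₀]`, and a convex function bounded above on a left half-line is
monotone; so `c` is monotone, and being lower semicontinuous it is left continuous. For a real
`K ≥ max (r*(φ), f(φ))` the affine function `a ↦ φ a - K` lies below `r` and below `f*`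
(Fenchel–Young), so `c > -∞`, while `c ≤ r` gives `c a₀ < 0`. The sweep preserves monotonicity
and convexity, and for monotone functions left continuity, and it sends positive values to `+∞`.
-/

open Set Filter Topology

noncomputable section

/-- `f : ℝ → EReal` is convex iff its epigraph is a convex set. -/
def EConvex (f : ℝ → EReal) : Prop :=
  Convex ℝ {p : ℝ × ℝ | f p.1 ≤ (p.2 : EReal)}

/-- The Fenchel dual `f*(a) = sup_θ (θ·a − f(θ))`. -/
def Fd (f : ℝ → EReal) : ℝ → EReal :=
  fun a => ⨆ θ : ℝ, ((θ * a : ℝ) : EReal) - f θ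

/-- The sweep `f°`: strictly positive values are swept to `+∞`. -/
def sweep (f : ℝ → EReal) : ℝ → EReal :=
  fun a => if f a ≤ 0 then f a else ⊤

/-- `speedp f = inf {a | f a > 0}`, as an extended real. -/
def speedp (f : ℝ → EReal) : EReal :=
  sInf ((fun a : ℝ => (a : EReal)) '' {a : ℝ | 0 < f a})

/-- k-convex functions. -/
def KConvex (f : ℝ → EReal) : Prop :=
  EConvex f ∧ (∃ θ : ℝ, 0 < θ ∧ f θ < ⊤) ∧ (∀ θ : ℝ, θ < 0 → f θ = ⊤)

/-- The closure `cl f`: the greatest lower semicontinuous function beneath `f`. -/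
def ecl (f : ℝ → EReal) : ℝ → EReal :=
  fun x => ⨆ g : {g : ℝ → EReal // LowerSemicontinuous g ∧ ∀ y, g y ≤ f y}, g.1 x

/-- r-functions: increasing, convex, somewhere in `(−∞,0)`, left continuous,
and `+∞` whenever strictly positive. -/
def RFunction (r : ℝ → EReal) : Prop :=
  Monotone r ∧ EConvex r ∧ (∃ a : ℝ, ⊥ < r a ∧ r a < 0) ∧
    (∀ a : ℝ, ContinuousWithinAt r (Set.Iio a) a) ∧
    (∀ a : ℝ, 0 < r a → r a = ⊤)

/-- The greatest lower semicontinuous convex function beneath `f` and `g`. -/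
def cv (f g : ℝ → EReal) : ℝ → EReal :=
  fun x => ⨆ h : {h : ℝ → EReal //
    LowerSemicontinuous h ∧ EConvex h ∧ (∀ y, h y ≤ f y) ∧ (∀ y, h y ≤ g y)}, h.1 x

/-- `enat f`: the pointwise sup of convex minorants `g` of `f` with `g θ / θ`
antitone on `(0,∞)`. -/
def enat (f : ℝ → EReal) : ℝ → EReal :=
  fun x => ⨆ g : {g : ℝ → EReal // EConvex g ∧ (∀ y, g y ≤ f y) ∧
      AntitoneOn (fun θ : ℝ => g θ * ((θ⁻¹ : ℝ) : EReal)) (Set.Ioi 0)}, g.1 x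

/-- `varthetapp f = sup {θ | f θ = enat f θ}`. -/
def varthetapp (f : ℝ → EReal) : EReal :=
  sSup ((fun θ : ℝ => (θ : EReal)) '' {θ : ℝ | f θ = enat f θ})

/-- `flt f = ((f*)°)*`. -/
def flt (f : ℝ → EReal) : ℝ → EReal := Fd (sweep (Fd f))

/-- The set where `f` is finite. -/
def Phi (f : ℝ → EReal) : Set ℝ := {θ : ℝ | f θ < ⊤}

/-- `A⁺`: points in `A` or above a point of `A`. -/
def plusSet (A : Set ℝ) : Set ℝ := {x : ℝ | ∃ a ∈ A, a ≤ x}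

/-- The subdifferential of `f` at `φ`. -/
def esubdiff (f : ℝ → EReal) (φ : ℝ) : Set ℝ :=
  {a : ℝ | ∀ θ : ℝ, f φ + ((a * (θ - φ) : ℝ) : EReal) ≤ f θ}

open Classical in
/-- The convex indicator of a set: `0` on `C` and `+∞` off it. -/
def echi (C : Set ℝ) : ℝ → EReal := fun θ => if θ ∈ C then 0 else ⊤

theorem EConvex.apply_add_le {h : ℝ → EReal} (hc : EConvex h) {x y s t a b : ℝ}
    (hx : h x ≤ s) (hy : h y ≤ t) (ha : 0 ≤ a) (hb : 0 ≤ b) (hab : a + b = 1) :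
    h (a * x + b * y) ≤ ((a * s + b * t : ℝ) : EReal) :=
  hc (x := (x, s)) (y := (y, t)) hx hy ha hb hab

theorem EConvex.iSup {ι : Sort*} {h : ι → ℝ → EReal} (hc : ∀ i, EConvex (h i)) :
    EConvex (fun x => ⨆ i, h i x) := by
  have hepi : {p : ℝ × ℝ | ⨆ i, h i p.1 ≤ (p.2 : EReal)} =
      ⋂ i, {p : ℝ × ℝ | h i p.1 ≤ (p.2 : EReal)} := by
    ext p
    simp only [mem_ofPred_eq, mem_iInter, iSup_le_iff]
  unfold EConvex
  rw [hepi]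
  exact convex_iInter hc

theorem ConvexOn.econvex_coe {g : ℝ → ℝ} (hg : ConvexOn ℝ univ g) :
    EConvex (fun x => (g x : EReal)) := by
  have hepi : {p : ℝ × ℝ | (g p.1 : EReal) ≤ (p.2 : EReal)} =
      {p : ℝ × ℝ | p.1 ∈ univ ∧ g p.1 ≤ p.2} := by
    ext p
    simp only [mem_ofPred_eq, mem_univ, true_and, EReal.coe_le_coe_iff]
  unfold EConvex
  rw [hepi]
  exact hg.convex_epigraph

theorem EConvex.monotone_of_le_Iic {h : ℝ → EReal} (hc : EConvex h) {a₀ M : ℝ}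
    (hM : ∀ z ≤ a₀, h z ≤ M) : Monotone h := by
  intro x y hxy
  by_contra! hlt
  obtain ⟨t, hyt, htx⟩ := EReal.exists_between_coe_real hlt
  have hxy : x < y := hxy.lt_of_ne (by rintro rfl; exact hlt.false)
  -- as `z → -∞`, the chord from `(z, M)` to `(y, t)` passes over `x` at a height tending to `t`
  set A : ℝ → ℝ := fun z => (y - x) / (y - z)
  have hA : Tendsto A atBot (𝓝 0) :=
    tendsto_const_nhds.div_atTop (tendsto_atTop_add_const_left _ y tendsto_neg_atBot_atTop)
  have hcomb : Tendsto (fun z => ((A z * M + (1 - A z) * t : ℝ) : EReal)) atBot (𝓝 (t : EReal)) :=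
    (continuous_coe_real_ereal.tendsto t).comp (by
      simpa using (hA.mul_const M).add (((tendsto_const_nhds (x := (1 : ℝ))).sub hA).mul_const t))
  obtain ⟨z, hz, hzx, hza⟩ := ((hcomb.eventually_lt_const htx).and
    ((eventually_lt_atBot x).and (eventually_le_atBot a₀))).exists
  have hyz : 0 < y - z := by linarith
  have hpoint : A z * z + (1 - A z) * y = x := by
    simp only [A]; field_simp; ring
  have hA0 : 0 ≤ A z := div_nonneg (by linarith) hyz.le
  have hA1 : A z ≤ 1 := (div_le_one hyz).2 (by linarith)
  have := hc.apply_add_le (hM z hza) hyt.le hA0 (b := 1 - A z) (by linarith) (add_sub_cancel _ _)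
  rw [hpoint] at this
  exact (this.trans_lt hz).false

theorem Monotone.continuousWithinAt_Iio_of_lowerSemicontinuous {α β : Type*}
    [TopologicalSpace α] [Preorder α] [TopologicalSpace β] [Preorder β] [OrderTopology β]
    {c : α → β} (hm : Monotone c) (hl : LowerSemicontinuous c) (a : α) :
    ContinuousWithinAt c (Iio a) a :=
  tendsto_order.2 ⟨fun _ hb => (hl a _ hb).filter_mono nhdsWithin_le_nhds,
    fun _ hb => eventually_nhdsWithin_of_forall fun _ hx => (hm (le_of_lt hx)).trans_lt hb⟩

section Sweep

variable {c : ℝ → EReal}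

theorem sweep_of_nonpos {a : ℝ} (h : c a ≤ 0) : sweep c a = c a := if_pos h

theorem sweep_eq_top_of_pos {a : ℝ} (h : 0 < sweep c a) : sweep c a = ⊤ := by
  unfold sweep at h ⊢
  split_ifs at h ⊢ with hle
  · exact absurd h hle.not_gt
  · rfl

theorem sweep_le_coe_iff {x t : ℝ} : sweep c x ≤ t ↔ c x ≤ t ∧ c x ≤ 0 := by
  unfold sweep
  split_ifs with h <;> simp [h]

theorem Monotone.sweep (hc : Monotone c) : Monotone (sweep c) := by
  intro x y hxy
  unfold _root_.sweep
  split_ifs with hx hy hy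
  · exact hc hxy
  · exact le_top
  · exact absurd ((hc hxy).trans hy) hx
  · exact le_rfl

theorem EConvex.sweep (hc : EConvex c) : EConvex (sweep c) := by
  rintro ⟨x, s⟩ hx ⟨y, t⟩ hy a b ha hb hab
  rw [mem_ofPred_eq, sweep_le_coe_iff] at hx hy
  change _root_.sweep c (a * x + b * y) ≤ ((a * s + b * t : ℝ) : EReal)
  refine sweep_le_coe_iff.2 ⟨hc.apply_add_le hx.1 hy.1 ha hb hab, ?_⟩
  simpa using hc.apply_add_le (s := 0) (t := 0) (by exact_mod_cast hx.2) (by exact_mod_cast hy.2)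
    ha hb hab

theorem ContinuousWithinAt.sweep_of_monotone {a : ℝ} (hm : Monotone c)
    (hcont : ContinuousWithinAt c (Iio a) a) : ContinuousWithinAt (sweep c) (Iio a) a := by
  by_cases h0 : c a ≤ 0
  · rw [ContinuousWithinAt, sweep_of_nonpos h0]
    refine hcont.congr' (eventually_nhdsWithin_of_forall fun x hx => ?_)
    exact (sweep_of_nonpos ((hm (le_of_lt hx)).trans h0)).symm
  · have htop : ∀ x, ¬c x ≤ 0 → _root_.sweep c x = ⊤ := fun x hx => if_neg hx
    rw [ContinuousWithinAt, htop a h0]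
    refine tendsto_const_nhds.congr' ?_
    filter_upwards [hcont.eventually_const_lt (not_le.1 h0)] with x hx
    exact (htop x hx.not_ge).symm

theorem rFunction_sweep (hm : Monotone c) (hc : EConvex c) (hneg : ∃ a, ⊥ < c a ∧ c a < 0)
    (hleft : ∀ a, ContinuousWithinAt c (Iio a) a) : RFunction (sweep c) := by
  obtain ⟨a, hbot, hlt⟩ := hneg
  refine ⟨hm.sweep, hc.sweep, ⟨a, ?_⟩, fun x => (hleft x).sweep_of_monotone hm,
    fun x => sweep_eq_top_of_pos⟩
  rw [sweep_of_nonpos hlt.le]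
  exact ⟨hbot, hlt⟩

end Sweep

theorem coe_mul_sub_le_Fd (f : ℝ → EReal) (θ a : ℝ) : ((θ * a : ℝ) : EReal) - f θ ≤ Fd f a :=
  le_iSup (fun θ : ℝ => ((θ * a : ℝ) : EReal) - f θ) θ

theorem coe_mul_sub_le_of_Fd_le {f : ℝ → EReal} {a K : ℝ} (h : Fd f a ≤ K) (θ : ℝ) :
    ((θ * a - K : ℝ) : EReal) ≤ f θ := by
  have := (coe_mul_sub_le_Fd f θ a).trans h
  rw [EReal.sub_le_iff_le_add (.inr (EReal.coe_ne_top K)) (.inr (EReal.coe_ne_bot K))] at this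
  rw [EReal.coe_sub]
  exact EReal.sub_le_of_le_add' this

theorem coe_mul_sub_le_Fd_of_le {f : ℝ → EReal} {θ K : ℝ} (h : f θ ≤ K) (a : ℝ) :
    ((θ * a - K : ℝ) : EReal) ≤ Fd f a := by
  rw [EReal.coe_sub]
  exact (EReal.sub_le_sub le_rfl h).trans (coe_mul_sub_le_Fd f θ a)

section ConvexMinorant

variable {f g : ℝ → EReal}

theorem cv_le_left (x : ℝ) : cv f g x ≤ f x := iSup_le fun h => h.2.2.2.1 x

theorem le_cv {h : ℝ → EReal} (hl : LowerSemicontinuous h) (hc : EConvex h)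
    (hf : ∀ y, h y ≤ f y) (hg : ∀ y, h y ≤ g y) (x : ℝ) : h x ≤ cv f g x :=
  le_iSup (fun h : {h : ℝ → EReal // LowerSemicontinuous h ∧ EConvex h ∧
    (∀ y, h y ≤ f y) ∧ (∀ y, h y ≤ g y)} => h.1 x) ⟨h, hl, hc, hf, hg⟩

theorem lowerSemicontinuous_cv : LowerSemicontinuous (cv f g) :=
  lowerSemicontinuous_iSup fun h => h.2.1

theorem econvex_cv : EConvex (cv f g) := EConvex.iSup fun h => h.2.2.1

theorem monotone_cv_of_le_Iic {a₀ M : ℝ} (hM : ∀ z ≤ a₀, f z ≤ M) : Monotone (cv f g) :=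
  fun _ _ hxy => iSup_mono fun h =>
    h.2.2.1.monotone_of_le_Iic (fun z hz => (h.2.2.2.1 z).trans (hM z hz)) hxy

end ConvexMinorant

theorem rFunction_sweep_cv_general (f r : ℝ → EReal) (hr : RFunction r)
    (hfin : ∃ φ : ℝ, 0 < φ ∧ max (Fd r φ) (f φ) < ⊤) :
    RFunction (sweep (cv r (Fd f))) := by
  obtain ⟨hrmono, -, ⟨a₀, -, hra₀⟩, -, -⟩ := hr
  obtain ⟨φ, -, hmax⟩ := hfin
  obtain ⟨K, hK, -⟩ := EReal.exists_between_coe_real hmax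
  have hℓconv : ConvexOn ℝ univ fun a : ℝ => a * φ - K := ⟨convex_univ,
    fun x _ y _ a b _ _ hab => le_of_eq (by simp only [smul_eq_mul]; linear_combination K * hab)⟩
  have hℓ : ∀ a, ((a * φ - K : ℝ) : EReal) ≤ cv r (Fd f) a :=
    le_cv (continuous_coe_real_ereal.comp (by fun_prop)).lowerSemicontinuous hℓconv.econvex_coe
      (coe_mul_sub_le_of_Fd_le ((le_max_left _ _).trans hK.le))
      fun a => mul_comm φ a ▸ coe_mul_sub_le_Fd_of_le ((le_max_right _ _).trans hK.le) a
  have hmono : Monotone (cv r (Fd f)) :=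
    monotone_cv_of_le_Iic (M := 0) fun z hz => (hrmono hz).trans (by exact_mod_cast hra₀.le)
  exact rFunction_sweep hmono econvex_cv
    ⟨a₀, (EReal.bot_lt_coe _).trans_le (hℓ a₀), (cv_le_left a₀).trans_lt hra₀⟩
    (hmono.continuousWithinAt_Iio_of_lowerSemicontinuous lowerSemicontinuous_cv)

/-- Lemma `s-i good`: if `f` is k-convex, `r` is an r-function and
`max (r*(φ), f(φ)) < ∞` for some `φ > 0`, then `(cv(r, f*))°` is an r-function. -/
theorem rFunction_sweep_cv (f r : ℝ → EReal) (hf : KConvex f) (hr : RFunction r)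
    (hfin : ∃ φ : ℝ, 0 < φ ∧ max (Fd r φ) (f φ) < ⊤) :
    RFunction (sweep (cv r (Fd f))) :=
  rFunction_sweep_cv_general f r hr hfin
end
end

section
/- Let f, κ : ℝ → EReal be k-convex with (cl f)(0) > 0, and suppose g = max(nat f, κ) (pointwise maximum) is finite at some point. Let ϑ = varthetapp(g). Then: (i) nat g ≥ max(nat f, nat κ) pointwise; (ii) varthetapp(κ) ≤ ϑ; (iii) for every θ < ϑ, g(θ) = nat g(θ) = max(nat f(θ), nat κ(θ)). -/
open Set Filter Topology

noncomputable section

/-!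
Parts (i) and (ii) hold because every admissible minorant of `nat f` or of `κ` is one of `g`.
For (iii) take `θ < θ'` with `g θ' = nat g θ'`. Only the case `g θ = κ θ > nat f θ` needs work,
and there it suffices to find an admissible minorant of `κ` attaining `κ θ` at `θ`.
If `κ = +∞` left of `θ`, the spike (`+∞` left of `θ`, `κ θ` at `θ`, `−∞` right of it) is one.
Otherwise `θ` is interior to the domain of `κ`: were `κ θ' = +∞`, then `nat g θ' = +∞` and the
antitone ratio would make `g` infinite on all of `(0, ∞)`, whereas a convex `g` finite somewhere
is finite at small positive points. So `κ` has a supporting line at `θ`. The antitone ratio of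
`nat g` gives `κ θ' / θ' ≤ κ θ / θ`, which forces that line to have a nonnegative intercept, and
then the line itself is an admissible minorant.
-/
def RatioAntitone (h : ℝ → EReal) : Prop :=
  AntitoneOn (fun θ : ℝ => h θ * ((θ⁻¹ : ℝ) : EReal)) (Ioi 0)

lemma ConvexOn.add_rightDeriv_mul_le {S : Set ℝ} {k : ℝ → ℝ} (hk : ConvexOn ℝ S k) {x y : ℝ}
    (hx : x ∈ interior S) (hy : y ∈ S) :
    k x + derivWithin k (Ioi x) x * (y - x) ≤ k y := by
  rcases lt_trichotomy y x with hyx | rfl | hxy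
  · have h := (hk.slope_le_leftDeriv_of_mem_interior hy hx hyx).trans
      (hk.leftDeriv_le_rightDeriv_of_mem_interior hx)
    rw [slope_def_field, div_le_iff₀ (sub_pos.2 hyx)] at h
    linarith
  · simp
  · have h := hk.rightDeriv_le_slope_of_mem_interior hx hy hxy
    rw [slope_def_field, le_div_iff₀ (sub_pos.2 hxy)] at h
    linarith

lemma ConvexOn.econvex {φ : ℝ → ℝ} (hφ : ConvexOn ℝ univ φ) : EConvex fun x => (φ x : EReal) := by
  simpa [EConvex] using hφ.convex_epigraph

namespace EConvex

variable {κ : ℝ → EReal}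

lemma apply_combo_le (hκ : EConvex κ) {x y tx ty a b : ℝ} (hx : κ x ≤ tx) (hy : κ y ≤ ty)
    (ha : 0 ≤ a) (hb : 0 ≤ b) (hab : a + b = 1) :
    κ (a * x + b * y) ≤ ((a * tx + b * ty : ℝ) : EReal) := by
  simpa using hκ (x := (x, tx)) hx (y := (y, ty)) hy ha hb hab

lemma convex_phi (hκ : EConvex κ) : Convex ℝ (Phi κ) := by
  intro x hx y hy a b ha hb hab
  obtain ⟨tx, htx, -⟩ := EReal.exists_between_coe_real hx
  obtain ⟨ty, hty, -⟩ := EReal.exists_between_coe_real hy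
  exact (hκ.apply_combo_le htx.le hty.le ha hb hab).trans_lt (EReal.coe_lt_top _)

lemma eq_bot_of_mem_openSegment (hκ : EConvex κ) {x y θ : ℝ} (hθ : θ ∈ openSegment ℝ x y)
    (hx : κ x < ⊤) (hy : κ y = ⊥) : κ θ = ⊥ := by
  obtain ⟨a, b, ha, hb, hab, rfl⟩ := hθ
  obtain ⟨tx, htx, -⟩ := EReal.exists_between_coe_real hx
  refine (EReal.eq_bot_iff_forall_lt _).2 fun t => ?_
  have hM : κ y ≤ (((t - 1 - a * tx) / b : ℝ) : EReal) := hy ▸ bot_le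
  refine (hκ.apply_combo_le htx.le hM ha.le hb.le hab).trans_lt ?_
  rw [EReal.coe_lt_coe_iff, mul_div_cancel₀ _ hb.ne']
  linarith

lemma convexOn_toReal (hκ : EConvex κ) (hbot : ∀ y ∈ Phi κ, κ y ≠ ⊥) :
    ConvexOn ℝ (Phi κ) fun y => (κ y).toReal := by
  have hcoe : ∀ z ∈ Phi κ, ((κ z).toReal : EReal) = κ z := fun z hz =>
    EReal.coe_toReal hz.ne (hbot z hz)
  refine ⟨hκ.convex_phi, fun x hx y hy a b ha hb hab => ?_⟩
  have hz := hκ.convex_phi hx hy ha hb hab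
  simp only [smul_eq_mul] at hz ⊢
  have h := hκ.apply_combo_le (hcoe x hx).ge (hcoe y hy).ge ha hb hab
  rwa [← hcoe _ hz, EReal.coe_le_coe_iff] at h

lemma exists_support (hκ : EConvex κ) {p θ q : ℝ} (hpθ : p < θ) (hθq : θ < q)
    (hp : κ p < ⊤) (hq : κ q < ⊤) (hθ : κ θ ≠ ⊥) :
    ∃ s : ℝ, ∀ y, (((κ θ).toReal + s * (y - θ) : ℝ) : EReal) ≤ κ y := by
  have hIoo : Ioo p q ⊆ Phi κ := fun z hz =>
    hκ.convex_phi.ordConnected.out hp hq (Ioo_subset_Icc_self hz)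
  have hbot : ∀ y ∈ Phi κ, κ y ≠ ⊥ := by
    intro y hy hyb
    rcases lt_trichotomy y θ with h | rfl | h
    · refine hθ (hκ.eq_bot_of_mem_openSegment ?_ hq hyb)
      rw [openSegment_symm, openSegment_eq_Ioo (h.trans hθq)]
      exact ⟨h, hθq⟩
    · exact hθ hyb
    · refine hθ (hκ.eq_bot_of_mem_openSegment ?_ hp hyb)
      rw [openSegment_eq_Ioo (hpθ.trans h)]
      exact ⟨hpθ, h⟩
  have hθint : θ ∈ interior (Phi κ) :=
    interior_mono hIoo (by rw [interior_Ioo]; exact ⟨hpθ, hθq⟩)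
  refine ⟨derivWithin (fun y => (κ y).toReal) (Ioi θ) θ, fun y => ?_⟩
  by_cases hy : y ∈ Phi κ
  · rw [← EReal.coe_toReal hy.ne (hbot y hy), EReal.coe_le_coe_iff]
    exact (hκ.convexOn_toReal hbot).add_rightDeriv_mul_le hθint hy
  · have htop : κ y = ⊤ := not_lt_top_iff.1 hy
    exact htop ▸ le_top

end EConvex

lemma enat_le_self (f : ℝ → EReal) (x : ℝ) : enat f x ≤ f x :=
  iSup_le fun h => h.2.2.1 x

lemma le_enat {f h : ℝ → EReal} (hconv : EConvex h) (hle : ∀ y, h y ≤ f y)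
    (hratio : RatioAntitone h) (x : ℝ) : h x ≤ enat f x :=
  le_iSup_of_le ⟨h, hconv, hle, hratio⟩ le_rfl

lemma enat_mono {f g : ℝ → EReal} (hfg : ∀ y, f y ≤ g y) (x : ℝ) : enat f x ≤ enat g x :=
  iSup_le fun h => le_enat h.2.1 (fun y => (h.2.2.1 y).trans (hfg y)) h.2.2.2 x

lemma econvex_enat (f : ℝ → EReal) : EConvex (enat f) := by
  intro p hp q hq a b ha hb hab
  simp only [mem_ofPred_eq] at hp hq ⊢
  refine iSup_le fun h => h.2.1 ?_ ?_ ha hb hab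
  · exact (le_enat h.2.1 h.2.2.1 h.2.2.2 p.1).trans hp
  · exact (le_enat h.2.1 h.2.2.1 h.2.2.2 q.1).trans hq

lemma EReal.mul_coe_mul_coe_inv (a : EReal) {c : ℝ} (hc : c ≠ 0) :
    a * (c : EReal) * ((c⁻¹ : ℝ) : EReal) = a := by
  rw [mul_assoc, ← EReal.coe_mul, mul_inv_cancel₀ hc, EReal.coe_one, mul_one]

lemma ratioAntitone_enat (f : ℝ → EReal) : RatioAntitone (enat f) := by
  intro x hx y hy hxy
  have hx' : 0 < x := hx
  have hy' : 0 < y := hy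
  have hy0 : (0 : EReal) ≤ y := EReal.coe_nonneg.2 hy'.le
  have hyinv0 : (0 : EReal) ≤ ((y⁻¹ : ℝ) : EReal) := EReal.coe_nonneg.2 (inv_nonneg.2 hy'.le)
  have hxinv0 : (0 : EReal) ≤ ((x⁻¹ : ℝ) : EReal) := EReal.coe_nonneg.2 (inv_nonneg.2 hx'.le)
  have key : enat f y ≤ enat f x * ((x⁻¹ : ℝ) : EReal) * (y : EReal) := by
    refine iSup_le fun h => ?_
    calc h.1 y = h.1 y * ((y⁻¹ : ℝ) : EReal) * ((y⁻¹⁻¹ : ℝ) : EReal) :=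
          (EReal.mul_coe_mul_coe_inv _ (inv_ne_zero hy'.ne')).symm
      _ ≤ h.1 x * ((x⁻¹ : ℝ) : EReal) * (y : EReal) := by
          rw [inv_inv]
          exact mul_le_mul_of_nonneg_right (h.2.2.2 hx hy hxy) hy0
      _ ≤ enat f x * ((x⁻¹ : ℝ) : EReal) * (y : EReal) :=
          mul_le_mul_of_nonneg_right (mul_le_mul_of_nonneg_right
            (le_enat h.2.1 h.2.2.1 h.2.2.2 x) hxinv0) hy0
  calc enat f y * ((y⁻¹ : ℝ) : EReal)
      ≤ enat f x * ((x⁻¹ : ℝ) : EReal) * (y : EReal) * ((y⁻¹ : ℝ) : EReal) :=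
        mul_le_mul_of_nonneg_right key hyinv0
    _ = enat f x * ((x⁻¹ : ℝ) : EReal) := EReal.mul_coe_mul_coe_inv _ hy'.ne'

lemma mul_inv_le_of_eq_enat {G : ℝ → EReal} {x y : ℝ} (hx : 0 < x) (hxy : x ≤ y)
    (hy : G y = enat G y) :
    G y * ((y⁻¹ : ℝ) : EReal) ≤ G x * ((x⁻¹ : ℝ) : EReal) := by
  rw [hy]
  exact (ratioAntitone_enat G hx (hx.trans_le hxy) hxy).trans
    (mul_le_mul_of_nonneg_right (enat_le_self G x) (EReal.coe_nonneg.2 (inv_nonneg.2 hx.le)))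

lemma eq_top_of_eq_enat {G : ℝ → EReal} {x y : ℝ} (hx : 0 < x) (hxy : x ≤ y)
    (hy : G y = enat G y) (htop : G y = ⊤) : G x = ⊤ := by
  have h := mul_inv_le_of_eq_enat hx hxy hy
  rw [htop, EReal.top_mul_of_pos (EReal.coe_pos.2 (inv_pos.2 (hx.trans_le hxy))), top_le_iff,
    EReal.mul_eq_top] at h
  have hxinv : (0 : EReal) < ((x⁻¹ : ℝ) : EReal) := EReal.coe_pos.2 (inv_pos.2 hx)
  rcases h with ⟨-, h⟩ | ⟨-, h⟩ | ⟨h, -⟩ | ⟨-, h⟩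
  · exact absurd h hxinv.not_gt
  · exact absurd h (EReal.coe_ne_bot _)
  · exact h
  · exact absurd h (EReal.coe_ne_top _)

def spike (c : ℝ) (v : EReal) : ℝ → EReal :=
  fun x => if x < c then ⊤ else if x = c then v else ⊥

lemma spike_le_coe_iff {c x t : ℝ} {v : EReal} :
    spike c v x ≤ t ↔ c ≤ x ∧ (x = c → v ≤ t) := by
  unfold spike
  split_ifs with h₁ h₂
  · simp [h₁]
  · simp [h₂]
  · simp [not_lt.1 h₁, h₂]

lemma econvex_spike (c : ℝ) (v : EReal) : EConvex (spike c v) := by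
  intro p hp q hq a b ha hb hab
  simp only [mem_ofPred_eq, spike_le_coe_iff, Prod.fst_add, Prod.snd_add, Prod.smul_fst,
    Prod.smul_snd, smul_eq_mul] at hp hq ⊢
  obtain ⟨hpc, hpv⟩ := hp
  obtain ⟨hqc, hqv⟩ := hq
  have hap : 0 ≤ a * (p.1 - c) := mul_nonneg ha (sub_nonneg.2 hpc)
  have hbq : 0 ≤ b * (q.1 - c) := mul_nonneg hb (sub_nonneg.2 hqc)
  have hsum : a * p.1 + b * q.1 - c = a * (p.1 - c) + b * (q.1 - c) := by
    linear_combination c * hab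
  refine ⟨by linarith, fun heq => ?_⟩
  have hp0 : a = 0 ∨ p.1 = c := by
    rcases mul_eq_zero.1 (show a * (p.1 - c) = 0 by linarith) with h | h
    exacts [Or.inl h, Or.inr (sub_eq_zero.1 h)]
  have hq0 : b = 0 ∨ q.1 = c := by
    rcases mul_eq_zero.1 (show b * (q.1 - c) = 0 by linarith) with h | h
    exacts [Or.inl h, Or.inr (sub_eq_zero.1 h)]
  rcases hp0 with ha0 | hpc'
  · obtain rfl : b = 1 := by linarith
    rcases hq0 with hb0 | hqc'
    · exact absurd hb0 one_ne_zero
    · simpa [ha0] using hqv hqc'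
  rcases hq0 with hb0 | hqc'
  · obtain rfl : a = 1 := by linarith
    simpa [hb0] using hpv hpc'
  calc v ≤ ((min p.2 q.2 : ℝ) : EReal) := by
        rcases min_choice p.2 q.2 with h | h <;> rw [h]
        exacts [hpv hpc', hqv hqc']
    _ ≤ ((a * p.2 + b * q.2 : ℝ) : EReal) := by
        rw [EReal.coe_le_coe_iff]
        have hm : min p.2 q.2 = a * min p.2 q.2 + b * min p.2 q.2 := by
          linear_combination (-min p.2 q.2) * hab
        nlinarith [mul_le_mul_of_nonneg_left (min_le_left p.2 q.2) ha,
          mul_le_mul_of_nonneg_left (min_le_right p.2 q.2) hb]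

lemma ratioAntitone_spike (c : ℝ) (v : EReal) : RatioAntitone (spike c v) := by
  intro x hx y hy hxy
  have hx' : 0 < x := hx
  have hy' : 0 < y := hy
  by_cases hxc : x < c
  · simp [spike, hxc, EReal.top_mul_of_pos (EReal.coe_pos.2 (inv_pos.2 hx'))]
  by_cases hyc : c < y
  · simp [spike, hyc.not_gt, hyc.ne', EReal.bot_mul_of_pos (EReal.coe_pos.2 (inv_pos.2 hy'))]
  obtain rfl : x = y := le_antisymm hxy (by linarith)
  exact le_rfl

lemma le_enat_of_forall_lt_eq_top {κ : ℝ → EReal} {θ : ℝ} (h : ∀ x < θ, κ x = ⊤) :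
    κ θ ≤ enat κ θ := by
  have hle : ∀ y, spike θ (κ θ) y ≤ κ y := by
    intro y
    unfold spike
    split_ifs with h₁ h₂
    · rw [h y h₁]
    · rw [h₂]
    · exact bot_le
  simpa [spike] using le_enat (econvex_spike θ (κ θ)) hle (ratioAntitone_spike θ (κ θ)) θ

lemma convexOn_affine (s c : ℝ) : ConvexOn ℝ univ fun x : ℝ => s * x + c :=
  ⟨convex_univ, fun x _ y _ a b _ _ hab => le_of_eq (by
    simp only [smul_eq_mul]
    linear_combination (-c) * hab)⟩

lemma ratioAntitone_affine (s : ℝ) {c : ℝ} (hc : 0 ≤ c) :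
    RatioAntitone fun x => ((s * x + c : ℝ) : EReal) := by
  intro x hx y hy hxy
  have hx' : 0 < x := hx
  have hy' : 0 < y := hy
  simp only [← EReal.coe_mul, EReal.coe_le_coe_iff]
  have hcxy : c / y ≤ c / x := div_le_div_of_nonneg_left hc hx' hxy
  calc (s * y + c) * y⁻¹ = s + c / y := by field_simp
    _ ≤ s + c / x := by linarith
    _ = (s * x + c) * x⁻¹ := by field_simp

lemma coe_affine_le_enat {κ : ℝ → EReal} {s c : ℝ} (hc : 0 ≤ c)
    (h : ∀ y, ((s * y + c : ℝ) : EReal) ≤ κ y) (x : ℝ) :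
    ((s * x + c : ℝ) : EReal) ≤ enat κ x :=
  le_enat (convexOn_affine s c).econvex h (ratioAntitone_affine s hc) x

lemma le_enat_of_ratio_le {κ : ℝ → EReal} (hκ : EConvex κ) {p θ θ' : ℝ} (hp0 : 0 ≤ p)
    (hpθ : p < θ) (hθθ' : θ < θ') (hp : κ p < ⊤) (hθ' : κ θ' < ⊤) (hθ : κ θ ≠ ⊥)
    (hratio : κ θ' * ((θ'⁻¹ : ℝ) : EReal) ≤ κ θ * ((θ⁻¹ : ℝ) : EReal)) :
    κ θ ≤ enat κ θ := by
  obtain ⟨s, hs⟩ := hκ.exists_support hpθ hθθ' hp hθ' hθ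
  have hθtop : κ θ ≠ ⊤ := (hκ.convex_phi.ordConnected.out hp hθ' ⟨hpθ.le, hθθ'.le⟩).ne
  have hθ'bot : κ θ' ≠ ⊥ := ne_bot_of_le_ne_bot (EReal.coe_ne_bot _) (hs θ')
  set r := (κ θ).toReal
  set r' := (κ θ').toReal
  have hr : (r : EReal) = κ θ := EReal.coe_toReal hθtop hθ
  have hr' : (r' : EReal) = κ θ' := EReal.coe_toReal hθ'.ne hθ'bot
  have hθpos : 0 < θ := hp0.trans_lt hpθ
  have hsupp : r + s * (θ' - θ) ≤ r' := by
    have h := hs θ'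
    rwa [← hr', EReal.coe_le_coe_iff] at h
  rw [← hr, ← hr', ← EReal.coe_mul, ← EReal.coe_mul, EReal.coe_le_coe_iff, ← div_eq_mul_inv,
    ← div_eq_mul_inv, div_le_div_iff₀ (hθpos.trans hθθ') hθpos] at hratio
  have hsθ : s * θ ≤ r := by
    have h : (s * θ - r) * (θ' - θ) ≤ 0 := by nlinarith [mul_le_mul_of_nonneg_left hsupp hθpos.le]
    nlinarith [sub_pos.2 hθθ']
  have hline : ∀ y, ((s * y + (r - s * θ) : ℝ) : EReal) ≤ κ y := fun y => by
    convert hs y using 2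
    ring
  calc κ θ = ((s * θ + (r - s * θ) : ℝ) : EReal) := by rw [← hr]; ring_nf
    _ ≤ enat κ θ := coe_affine_le_enat (sub_nonneg.2 hsθ) hline θ

lemma lt_top_of_eq_enat_max {f κ G : ℝ → EReal} (hf : KConvex f) (hκ : KConvex κ)
    (hG : ∀ θ, G θ = max (enat f θ) (κ θ)) (hfin : ∃ θ, G θ < ⊤) {p θ : ℝ} (hpθ : p < θ)
    (hp : κ p < ⊤) (hθ : G θ = enat G θ) : κ θ < ⊤ := by
  by_contra hκθ
  rw [not_lt_top_iff] at hκθ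
  have hp0 : 0 ≤ p := not_lt.1 fun h => hp.ne (hκ.2.2 p h)
  have hGθ : G θ = ⊤ := by rw [hG, hκθ, max_top_right]
  have hGtop : ∀ x, x ≠ 0 → G x = ⊤ := by
    intro x hx
    rcases hx.lt_or_gt with hx | hx
    · rw [hG, hκ.2.2 x hx, max_top_right]
    rcases le_or_gt x θ with hxθ | hθx
    · exact eq_top_of_eq_enat hx hxθ hθ hGθ
    · have hκx : κ x = ⊤ := not_lt_top_iff.1 fun hx' =>
        (hκ.1.convex_phi.ordConnected.out hp hx' ⟨hpθ.le, hθx.le⟩).ne hκθ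
      rw [hG, hκx, max_top_right]
  obtain ⟨w, hw⟩ := hfin
  obtain rfl : w = 0 := by
    by_contra h
    exact hw.ne (hGtop w h)
  rw [hG, max_lt_iff] at hw
  obtain ⟨q, hq, hfq⟩ := hf.2.1
  obtain ⟨q', hq', hκq'⟩ := hκ.2.1
  have hx : 0 < min q q' := lt_min hq hq'
  have hfx : enat f (min q q') < ⊤ := (econvex_enat f).convex_phi.ordConnected.out hw.1
    ((enat_le_self f q).trans_lt hfq) ⟨hx.le, min_le_left _ _⟩
  have hκx : κ (min q q') < ⊤ :=
    hκ.1.convex_phi.ordConnected.out hw.2 hκq' ⟨hx.le, min_le_right _ _⟩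
  exact (hG _ ▸ max_lt hfx hκx).ne (hGtop _ hx.ne')

lemma le_enat_of_lt_of_eq_enat_max {f κ G : ℝ → EReal} (hf : KConvex f) (hκ : KConvex κ)
    (hG : ∀ θ, G θ = max (enat f θ) (κ θ)) (hfin : ∃ θ, G θ < ⊤) {θ θ' : ℝ} (hθθ' : θ < θ')
    (hθ' : G θ' = enat G θ') (hc : enat f θ < κ θ) : κ θ ≤ enat κ θ := by
  by_cases hleft : ∀ x < θ, κ x = ⊤
  · exact le_enat_of_forall_lt_eq_top hleft
  push Not at hleft
  obtain ⟨p, hpθ, hp⟩ := hleft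
  have hp' : κ p < ⊤ := lt_top_iff_ne_top.2 hp
  have hp0 : 0 ≤ p := not_lt.1 fun h => hp (hκ.2.2 p h)
  have hθpos : 0 < θ := hp0.trans_lt hpθ
  have hκθ' : κ θ' < ⊤ := lt_top_of_eq_enat_max hf hκ hG hfin (hpθ.trans hθθ') hp' hθ'
  refine le_enat_of_ratio_le hκ.1 hp0 hpθ hθθ' hp' hκθ' (ne_bot_of_gt hc) ?_
  calc κ θ' * ((θ'⁻¹ : ℝ) : EReal) ≤ G θ' * ((θ'⁻¹ : ℝ) : EReal) :=
        mul_le_mul_of_nonneg_right (hG θ' ▸ le_max_right _ _)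
          (EReal.coe_nonneg.2 (inv_nonneg.2 (hθpos.trans hθθ').le))
    _ ≤ G θ * ((θ⁻¹ : ℝ) : EReal) := mul_inv_le_of_eq_enat hθpos hθθ'.le hθ'
    _ = κ θ * ((θ⁻¹ : ℝ) : EReal) := by rw [hG, max_eq_right hc.le]

theorem conc_cut_general (f κ : ℝ → EReal) (hf : KConvex f) (hκ : KConvex κ)
    (g : ℝ → EReal) (hg : g = fun θ => max (enat f θ) (κ θ))
    (hfin : ∃ θ : ℝ, g θ < ⊤) :
    (∀ θ : ℝ, max (enat f θ) (enat κ θ) ≤ enat g θ) ∧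
    varthetapp κ ≤ varthetapp g ∧
    (∀ θ : ℝ, (θ : EReal) < varthetapp g →
      g θ = enat g θ ∧ enat g θ = max (enat f θ) (enat κ θ)) := by
  have hgy : ∀ θ, g θ = max (enat f θ) (κ θ) := fun θ => by rw [hg]
  have hlow : ∀ θ, max (enat f θ) (enat κ θ) ≤ enat g θ := fun θ =>
    max_le (le_enat (econvex_enat f) (fun y => hgy y ▸ le_max_left _ _) (ratioAntitone_enat f) θ)
      (enat_mono (fun y => hgy y ▸ le_max_right _ _) θ)
  have hsqueeze : ∀ θ, g θ ≤ max (enat f θ) (enat κ θ) →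
      g θ = enat g θ ∧ enat g θ = max (enat f θ) (enat κ θ) := fun θ h =>
    ⟨le_antisymm (h.trans (hlow θ)) (enat_le_self g θ),
      le_antisymm ((enat_le_self g θ).trans h) (hlow θ)⟩
  refine ⟨hlow, sSup_le_sSup (image_mono fun θ (hθ : κ θ = enat κ θ) =>
    (hsqueeze θ (by rw [hgy, hθ])).1), fun θ hθ => hsqueeze θ ?_⟩
  obtain ⟨_, ⟨θ', hθ'eq, rfl⟩, hθθ'⟩ := lt_sSup_iff.1 hθ
  rcases le_or_gt (κ θ) (enat f θ) with hc | hc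
  · rw [hgy, max_eq_left hc]
    exact le_max_left _ _
  · rw [hgy, max_eq_right hc.le]
    exact (le_enat_of_lt_of_eq_enat_max hf hκ hgy hfin (EReal.coe_lt_coe_iff.1 hθθ') hθ'eq
      hc).trans (le_max_right _ _)

/-- Lemma `conc cut`: with `f, κ` k-convex, `(cl f)(0) > 0` and
`g = max (nat f) κ` finite somewhere: (i) `nat g ≥ max (nat f) (nat κ)`;
(ii) `varthetapp κ ≤ varthetapp g`; (iii) below `varthetapp g`,
`g = nat g = max (nat f) (nat κ)`. -/
theorem conc_cut (f κ : ℝ → EReal) (hf : KConvex f) (hκ : KConvex κ)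
    (hcl : 0 < ecl f 0)
    (g : ℝ → EReal) (hg : g = fun θ => max (enat f θ) (κ θ))
    (hfin : ∃ θ : ℝ, g θ < ⊤) :
    (∀ θ : ℝ, max (enat f θ) (enat κ θ) ≤ enat g θ) ∧
    varthetapp κ ≤ varthetapp g ∧
    (∀ θ : ℝ, (θ : EReal) < varthetapp g →
      g θ = enat g θ ∧ enat g θ = max (enat f θ) (enat κ θ)) :=
  conc_cut_general f κ hf hκ g hg hfin
end
end

section
/- Let f : ℝ → EReal be k-convex and Γ = speedp(f*). Then: (i) if Γ > −∞ then flt f(θ) = sup {θ·a − f*(a) : a ∈ ℝ, a ≤ Γ} for every θ, while if Γ = −∞ then flt f ≡ −∞; (ii) flt f ≤ f pointwise, θ ↦ flt f(θ)/θ is antitone on (0, ∞), and consequently flt f ≤ nat f pointwise; (iii) for all reals θ' ≥ θ, flt f(θ') ≤ flt f(θ) + (θ' − θ)·Γ. -/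
open Set Filter Topology

noncomputable section

namespace FltAux

lemma fd_mono {f : ℝ → EReal} (hneg : ∀ θ : ℝ, θ < 0 → f θ = ⊤) : Monotone (Fd f) := by
  intro a b hab
  refine iSup_mono fun θ => ?_
  rcases lt_or_ge θ 0 with h | h
  · rw [hneg θ h]; simp
  · exact EReal.sub_le_sub (EReal.coe_le_coe_iff.2 (mul_le_mul_of_nonneg_left hab h)) le_rfl

lemma le_speedp {g : ℝ → EReal} (hg : Monotone g) {a : ℝ} (ha : g a ≤ 0) :
    (a : EReal) ≤ speedp g := by
  refine le_sInf ?_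
  rintro x ⟨b, hb, rfl⟩
  simp only [EReal.coe_le_coe_iff]
  by_contra hba
  push_neg at hba
  exact absurd ((Set.mem_setOf_eq ▸ hb).trans_le (hg hba.le)) ha.not_gt

lemma speedp_le {g : ℝ → EReal} {a : ℝ} (ha : 0 < g a) : speedp g ≤ (a : EReal) :=
  sInf_le ⟨a, ha, rfl⟩

lemma sub_sub_le (c : ℝ) (w : EReal) : (c:EReal) - ((c:EReal) - w) ≤ w := by
  induction w with
  | bot => simp
  | coe w => rw [← EReal.coe_sub, ← EReal.coe_sub, EReal.coe_le_coe_iff]; linarith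
  | top => exact le_top

lemma key {g : ℝ → EReal} (θ a : ℝ) (hpos : 0 < g a)
    (hb : ∀ b : ℝ, b < a → g b ≤ 0) :
    ((θ * a : ℝ) : EReal) - g a ≤ ⨆ b : ℝ, ((b * θ : ℝ) : EReal) - sweep g b := by
  by_cases hT : g a = ⊤
  · rw [hT, EReal.sub_top]; exact bot_le
  obtain ⟨c, hc⟩ : ∃ c : ℝ, g a = (c : EReal) :=
    ⟨(g a).toReal, (EReal.coe_toReal hT (bot_le.trans_lt hpos).ne').symm⟩
  have hcpos : (0:ℝ) < c := by
    rw [hc] at hpos; exact_mod_cast hpos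
  have habs : (0:ℝ) < |θ| + 1 := by positivity
  set b := a - c / (|θ| + 1) with hbdef
  have hba : b < a := sub_lt_self _ (div_pos hcpos habs)
  have hgb : g b ≤ 0 := hb b hba
  have hreal : θ * a - c ≤ b * θ := by
    have h1 : θ * (c / (|θ| + 1)) ≤ c := by
      calc θ * (c / (|θ| + 1)) ≤ (|θ| + 1) * (c / (|θ| + 1)) :=
            mul_le_mul_of_nonneg_right (by linarith [le_abs_self θ])
              (le_of_lt (div_pos hcpos habs))
        _ = c := by field_simp
    calc θ * a - c ≤ θ * a - θ * (c / (|θ| + 1)) := by linarith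
      _ = b * θ := by rw [hbdef]; ring
  calc ((θ * a : ℝ) : EReal) - g a = ((θ * a - c : ℝ) : EReal) := by
        rw [hc, ← EReal.coe_sub]
    _ ≤ ((b * θ : ℝ) : EReal) := EReal.coe_le_coe_iff.2 hreal
    _ ≤ ((b * θ : ℝ) : EReal) - g b := by
        nth_rewrite 1 [← sub_zero ((b * θ : ℝ) : EReal)]
        exact EReal.sub_le_sub le_rfl hgb
    _ = ((b * θ : ℝ) : EReal) - sweep g b := by rw [sweep, if_pos hgb]
    _ ≤ _ := le_iSup (fun b : ℝ => ((b * θ : ℝ) : EReal) - sweep g b) b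

end FltAux

/-- Lemma `f-natural1`: properties of `flt f` for k-convex `f`, with
`Γ = speedp f*`. -/
theorem flt_properties (f : ℝ → EReal) (hf : KConvex f) :
    ((⊥ < speedp (Fd f) →
        ∀ θ : ℝ, flt f θ =
          ⨆ a : {a : ℝ // (a : EReal) ≤ speedp (Fd f)},
            ((θ * a.1 : ℝ) : EReal) - Fd f a.1) ∧
      (speedp (Fd f) = ⊥ → ∀ θ : ℝ, flt f θ = ⊥)) ∧
    ((∀ θ : ℝ, flt f θ ≤ f θ) ∧
      AntitoneOn (fun θ : ℝ => flt f θ * ((θ⁻¹ : ℝ) : EReal)) (Set.Ioi 0) ∧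
      (∀ θ : ℝ, flt f θ ≤ enat f θ)) ∧
    (∀ θ θ' : ℝ, θ ≤ θ' →
      flt f θ' ≤ flt f θ + ((θ' - θ : ℝ) : EReal) * speedp (Fd f)) := by
  obtain ⟨hconv, ⟨θ₀, hθ₀, hθ₀top⟩, hneg⟩ := hf
  have hgmono : Monotone (Fd f) := FltAux.fd_mono hneg
  have hflt : ∀ θ : ℝ, flt f θ = ⨆ a : ℝ, ((a * θ : ℝ) : EReal) - sweep (Fd f) a :=
    fun θ => rfl
  have hsweep_top : ∀ a : ℝ, ¬ Fd f a ≤ 0 → sweep (Fd f) a = ⊤ := fun a h => if_neg h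
  have hsweep_eq : ∀ a : ℝ, Fd f a ≤ 0 → sweep (Fd f) a = Fd f a := fun a h => if_pos h
  -- Part A
  have partA1 : ⊥ < speedp (Fd f) → ∀ θ : ℝ, flt f θ =
      ⨆ a : {a : ℝ // (a : EReal) ≤ speedp (Fd f)},
        ((θ * a.1 : ℝ) : EReal) - Fd f a.1 := by
    intro _ θ
    apply le_antisymm
    · rw [hflt θ]
      refine iSup_le fun a => ?_
      by_cases h : Fd f a ≤ 0
      · rw [hsweep_eq a h, mul_comm]
        exact le_iSup_of_le ⟨a, FltAux.le_speedp hgmono h⟩ le_rfl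
      · rw [hsweep_top a h, EReal.sub_top]; exact bot_le
    · refine iSup_le ?_
      rintro ⟨a, ha⟩
      by_cases h : Fd f a ≤ 0
      · rw [hflt θ]
        refine le_iSup_of_le a ?_
        rw [hsweep_eq a h, mul_comm]
      · push_neg at h
        have hb : ∀ b : ℝ, b < a → Fd f b ≤ 0 := by
          intro b hba
          by_contra hb'
          push_neg at hb'
          have h1 : (a : EReal) ≤ (b : EReal) := ha.trans (FltAux.speedp_le hb')
          exact absurd (EReal.coe_le_coe_iff.1 h1) (not_le.2 hba)
        rw [hflt θ]
        exact FltAux.key θ a h hb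
  have partA2 : speedp (Fd f) = ⊥ → ∀ θ : ℝ, flt f θ = ⊥ := by
    intro hGb θ
    rw [hflt θ]
    refine iSup_eq_bot.2 fun a => ?_
    have h : ¬ Fd f a ≤ 0 := by
      intro h
      have h1 := FltAux.le_speedp hgmono h
      rw [hGb] at h1
      exact absurd (le_bot_iff.1 h1) (EReal.coe_ne_bot a)
    rw [hsweep_top a h, EReal.sub_top]
  -- Part B1
  have partB1 : ∀ θ : ℝ, flt f θ ≤ f θ := by
    intro θ
    rw [hflt θ]
    refine iSup_le fun a => ?_
    have h1 : ((θ * a : ℝ) : EReal) - f θ ≤ Fd f a :=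
      le_iSup (fun θ' : ℝ => ((θ' * a : ℝ) : EReal) - f θ') θ
    have h2 : Fd f a ≤ sweep (Fd f) a := by
      rw [sweep]; split
      · exact le_rfl
      · exact le_top
    calc ((a * θ : ℝ) : EReal) - sweep (Fd f) a
        ≤ ((a * θ : ℝ) : EReal) - (((θ * a : ℝ) : EReal) - f θ) :=
          EReal.sub_le_sub le_rfl (h1.trans h2)
      _ = ((θ * a : ℝ) : EReal) - (((θ * a : ℝ) : EReal) - f θ) := by rw [mul_comm]
      _ ≤ f θ := FltAux.sub_sub_le _ _
  -- distribution of mul over iSup for positive real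
  have hdist : ∀ (T : ℝ → EReal) (c : ℝ), 0 < c →
      (⨆ i, T i) * (c : EReal) = ⨆ i, T i * (c : EReal) := by
    intro T c hc
    have hc' : (0 : EReal) < (c : EReal) := by exact_mod_cast hc
    have hct : (c : EReal) ≠ ⊤ := EReal.coe_ne_top c
    apply le_antisymm
    · rw [← EReal.le_div_iff_mul_le hc' hct]
      refine iSup_le fun i => ?_
      rw [EReal.le_div_iff_mul_le hc' hct]
      exact le_iSup (fun i => T i * (c : EReal)) i
    · exact iSup_le fun i => mul_le_mul_of_nonneg_right (le_iSup T i) hc'.le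
  -- Part B2
  have partB2 : AntitoneOn (fun θ : ℝ => flt f θ * ((θ⁻¹ : ℝ) : EReal)) (Set.Ioi 0) := by
    intro x hx y hy hxy
    simp only [Set.mem_Ioi] at hx hy
    simp only
    rw [hflt x, hflt y, hdist _ _ (inv_pos.2 hy), hdist _ _ (inv_pos.2 hx)]
    refine iSup_mono fun a => ?_
    by_cases h : Fd f a ≤ 0
    · rw [hsweep_eq a h]
      by_cases hB : Fd f a = ⊥
      · rw [hB, EReal.coe_sub_bot, EReal.coe_sub_bot,
          EReal.top_mul_coe_of_pos (inv_pos.2 hy), EReal.top_mul_coe_of_pos (inv_pos.2 hx)]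
      · obtain ⟨c, hc⟩ : ∃ c : ℝ, Fd f a = (c : EReal) :=
          ⟨(Fd f a).toReal, (EReal.coe_toReal (h.trans_lt (by norm_num)).ne hB).symm⟩
        have hc0 : c ≤ 0 := by rw [hc] at h; exact_mod_cast h
        rw [hc, ← EReal.coe_sub, ← EReal.coe_sub, ← EReal.coe_mul, ← EReal.coe_mul,
          EReal.coe_le_coe_iff]
        rw [← div_eq_mul_inv, ← div_eq_mul_inv, div_le_div_iff₀ hy hx]
        nlinarith [mul_nonneg (neg_nonneg.2 hc0) (sub_nonneg.2 hxy)]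
    · rw [hsweep_top a h, EReal.sub_top,
        EReal.bot_mul_coe_of_pos (inv_pos.2 hy)]
      exact bot_le
  -- convexity of flt f
  have hconvflt : EConvex (flt f) := by
    intro p hp q hq s t hs ht hst
    simp only [Set.mem_setOf_eq] at hp hq ⊢
    rw [hflt] at hp hq ⊢
    refine iSup_le fun a => ?_
    have hp' : ((p.1 * a : ℝ) : EReal) - sweep (Fd f) a ≤ ((p.2 : ℝ) : EReal) :=
      (le_iSup (fun b : ℝ => ((b * p.1 : ℝ) : EReal) - sweep (Fd f) b) a).trans_eq'
        (by rw [mul_comm]) |>.trans hp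
    have hq' : ((q.1 * a : ℝ) : EReal) - sweep (Fd f) a ≤ ((q.2 : ℝ) : EReal) :=
      (le_iSup (fun b : ℝ => ((b * q.1 : ℝ) : EReal) - sweep (Fd f) b) a).trans_eq'
        (by rw [mul_comm]) |>.trans hq
    by_cases hT : sweep (Fd f) a = ⊤
    · rw [hT, EReal.sub_top]; exact bot_le
    by_cases hB : sweep (Fd f) a = ⊥
    · rw [hB, EReal.coe_sub_bot] at hp'
      exact absurd (top_le_iff.1 hp') (EReal.coe_ne_top _)
    obtain ⟨c, hc⟩ : ∃ c : ℝ, sweep (Fd f) a = (c : EReal) :=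
      ⟨(sweep (Fd f) a).toReal, (EReal.coe_toReal hT hB).symm⟩
    rw [hc, ← EReal.coe_sub, EReal.coe_le_coe_iff] at hp' hq'
    rw [hc, ← EReal.coe_sub, EReal.coe_le_coe_iff]
    have h1 : s * (p.1 * a - c) ≤ s * p.2 := mul_le_mul_of_nonneg_left hp' hs
    have h2 : t * (q.1 * a - c) ≤ t * q.2 := mul_le_mul_of_nonneg_left hq' ht
    have hpr1 : (s • p + t • q).1 = s * p.1 + t * q.1 := rfl
    have hpr2 : (s • p + t • q).2 = s * p.2 + t * q.2 := rfl
    rw [hpr1, hpr2]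
    have hc' : s * c + t * c = c := by rw [← add_mul, hst, one_mul]
    nlinarith [h1, h2, hc']
  have partB3 : ∀ θ : ℝ, flt f θ ≤ enat f θ := fun θ =>
    le_iSup_of_le (f := fun g : {g : ℝ → EReal // EConvex g ∧ (∀ y, g y ≤ f y) ∧
      AntitoneOn (fun θ : ℝ => g θ * ((θ⁻¹ : ℝ) : EReal)) (Set.Ioi 0)} => g.1 θ)
      ⟨flt f, hconvflt, partB1, partB2⟩ le_rfl
  -- Part C
  have partC : ∀ θ θ' : ℝ, θ ≤ θ' →
      flt f θ' ≤ flt f θ + ((θ' - θ : ℝ) : EReal) * speedp (Fd f) := by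
    intro θ θ' hθ
    rw [hflt θ']
    refine iSup_le fun a => ?_
    by_cases h : Fd f a ≤ 0
    · rw [hsweep_eq a h]
      have h1 : ((a * θ : ℝ) : EReal) - Fd f a ≤ flt f θ := by
        rw [hflt θ]
        refine le_iSup_of_le a ?_
        rw [hsweep_eq a h]
      have h2 : ((θ' - θ : ℝ) : EReal) * (a : EReal) ≤
          ((θ' - θ : ℝ) : EReal) * speedp (Fd f) :=
        mul_le_mul_of_nonneg_left (FltAux.le_speedp hgmono h)
          (by exact_mod_cast sub_nonneg.2 hθ)
      have heq : ((a * θ' : ℝ) : EReal) - Fd f a =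
          (((a * θ : ℝ) : EReal) - Fd f a) + ((θ' - θ : ℝ) : EReal) * (a : EReal) := by
        by_cases hB : Fd f a = ⊥
        · rw [hB, EReal.coe_sub_bot, EReal.coe_sub_bot, ← EReal.coe_mul, EReal.top_add_coe]
        · obtain ⟨c, hc⟩ : ∃ c : ℝ, Fd f a = (c : EReal) :=
            ⟨(Fd f a).toReal, (EReal.coe_toReal (h.trans_lt (by norm_num)).ne hB).symm⟩
          rw [hc, ← EReal.coe_sub, ← EReal.coe_sub, ← EReal.coe_mul, ← EReal.coe_add,
            EReal.coe_eq_coe_iff]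
          ring
      rw [heq]
      exact add_le_add h1 h2
    · rw [hsweep_top a h, EReal.sub_top]; exact bot_le
  exact ⟨⟨partA1, partA2⟩, ⟨partB1, partB2, partB3⟩, partC⟩
end
end

section
/- Let h : ℝ → EReal be k-convex with h(φ) < +∞, let g : ℝ → EReal be convex with g ≥ h pointwise and g(φ) = h(φ), and let γ ∈ ∂h(φ). Then: (i) γ ∈ ∂g(φ) and g*(γ) = h*(γ); (ii) if h(θ) = g(θ) for every θ ≤ φ then g*(a) = h*(a) for every a ≤ γ; (iii) if in addition g(θ) = +∞ for every θ > φ then g*(a) = φ·a − h(φ) for every a > γ. -/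
open Set Filter Topology

noncomputable section

lemma key_lemma (h : ℝ → EReal) (φ γ a θ : ℝ) (hφ : h φ ≠ ⊤)
    (hsub : h φ + ((γ * (θ - φ) : ℝ) : EReal) ≤ h θ)
    (hdir : (θ - φ) * a ≤ (θ - φ) * γ) :
    ((θ * a : ℝ) : EReal) - h θ ≤ ((φ * a : ℝ) : EReal) - h φ := by
  rcases eq_or_ne (h φ) ⊥ with hb | hb
  · rw [hb]
    have h2 : ((φ * a : ℝ) : EReal) - ⊥ = ⊤ := by
      rw [sub_eq_add_neg, EReal.neg_bot, EReal.coe_add_top]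
    rw [h2]; exact le_top
  · lift h φ to ℝ using ⟨hφ, hb⟩ with x hx
    rcases eq_or_ne (h θ) ⊤ with ht | ht
    · rw [ht, EReal.sub_top]; exact bot_le
    · have htb : h θ ≠ ⊥ := by
        intro hbt
        rw [hbt] at hsub
        rw [← EReal.coe_add] at hsub
        exact (EReal.coe_ne_bot _) (le_bot_iff.mp hsub)
      lift h θ to ℝ using ⟨ht, htb⟩ with y hy
      rw [← hx, ← hy, ← EReal.coe_sub, ← EReal.coe_sub] at *
      rw [← EReal.coe_add] at hsub
      rw [EReal.coe_le_coe_iff] at *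
      nlinarith

lemma fd_eq_of_subdiff (h : ℝ → EReal) (φ γ : ℝ) (hφ : h φ ≠ ⊤)
    (hγ : γ ∈ esubdiff h φ) :
    Fd h γ = ((φ * γ : ℝ) : EReal) - h φ := by
  refine le_antisymm (iSup_le fun θ => key_lemma h φ γ γ θ hφ (hγ θ) le_rfl) ?_
  exact le_iSup (fun θ : ℝ => ((θ * γ : ℝ) : EReal) - h θ) φ

lemma fd_antitone (h g : ℝ → EReal) (hge : ∀ θ, h θ ≤ g θ) (a : ℝ) :
    Fd g a ≤ Fd h a :=
  iSup_mono fun θ => EReal.sub_le_sub le_rfl (hge θ)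

/-- Lemma `rate agree new`: if `h` is k-convex, `h(φ) < ∞`, `g` is convex with
`g ≥ h` and `g(φ) = h(φ)`, and `γ ∈ ∂h(φ)`, then (i) `γ ∈ ∂g(φ)` and
`g*(γ) = h*(γ)`; (ii) if `h = g` on `(−∞, φ]` then `g* = h*` on `(−∞, γ]`;
(iii) if moreover `g = +∞` on `(φ, ∞)` then `g*(a) = φ a − h(φ)` for `a > γ`. -/
theorem rate_agree (h g : ℝ → EReal) (φ γ : ℝ)
    (hh : KConvex h) (hφ : h φ < ⊤)
    (hg : EConvex g) (hge : ∀ θ : ℝ, h θ ≤ g θ) (hgφ : g φ = h φ)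
    (hγ : γ ∈ esubdiff h φ) :
    (γ ∈ esubdiff g φ ∧ Fd g γ = Fd h γ) ∧
    ((∀ θ : ℝ, θ ≤ φ → h θ = g θ) → ∀ a : ℝ, a ≤ γ → Fd g a = Fd h a) ∧
    ((∀ θ : ℝ, θ ≤ φ → h θ = g θ) → (∀ θ : ℝ, φ < θ → g θ = ⊤) →
      ∀ a : ℝ, γ < a → Fd g a = ((φ * a : ℝ) : EReal) - h φ) := by
  have hφt : h φ ≠ ⊤ := hφ.ne
  have hgφt : g φ ≠ ⊤ := by rw [hgφ]; exact hφt
  have hsubg : γ ∈ esubdiff g φ := by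
    intro θ
    rw [hgφ]
    exact le_trans (hγ θ) (hge θ)
  refine ⟨⟨hsubg, ?_⟩, ?_, ?_⟩
  · rw [fd_eq_of_subdiff g φ γ hgφt hsubg, fd_eq_of_subdiff h φ γ hφt hγ, hgφ]
  · intro heq a ha
    refine le_antisymm (fd_antitone h g hge a) (iSup_le fun θ => ?_)
    by_cases hle : θ ≤ φ
    · rw [heq θ hle]
      exact le_iSup (fun θ : ℝ => ((θ * a : ℝ) : EReal) - g θ) θ
    · push_neg at hle
      have step : ((θ * a : ℝ) : EReal) - h θ ≤ ((φ * a : ℝ) : EReal) - g φ := by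
        rw [hgφ]
        exact key_lemma h φ γ a θ hφt (hγ θ)
          (mul_le_mul_of_nonneg_left ha (by linarith))
      exact step.trans (le_iSup (fun θ : ℝ => ((θ * a : ℝ) : EReal) - g θ) φ)
  · intro heq htop a ha
    refine le_antisymm (iSup_le fun θ => ?_) ?_
    · by_cases hle : θ ≤ φ
      · rw [← heq θ hle]
        exact key_lemma h φ γ a θ hφt (hγ θ)
          (mul_le_mul_of_nonpos_left ha.le (by linarith))
      · push_neg at hle
        rw [htop θ hle, EReal.sub_top]
        exact bot_le
    · rw [← hgφ]
      exact le_iSup (fun θ : ℝ => ((θ * a : ℝ) : EReal) - g θ) φ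
end
end
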